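/- Let 0 → A → B → C → 0 be a weakly A-admissible short exact sequence of Abel complexes. Then the AE characteristics satisfy χ_A(A) − χ_A(B) + χ_A(C) = 0. -/

import Mathlib

open CategoryTheory Filter Topology

/-- The rank of an `R`-module `M`: the dimension over the fraction field `Q = Frac(R)`
of `Q ⊗_R M` (by convention `0` if that dimension is infinite). -/
noncomputable def rk (R : Type) [CommRing R] [IsDomain R]
    (M : Type) [AddCommGroup M] [Module R M] : ℕ :=
  Module.finrank (FractionRing R) (TensorProduct R (FractionRing R) M)

/-- The Abel limit: `HasAbelLim a L` means the power series `∑ aₙ xⁿ` has radius of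
convergence at least `1` (convergence for `|x| < 1`) and
`(1 - x) * ∑ aₙ xⁿ → L` as `x → 1⁻`. -/
def HasAbelLim (a : ℕ → ℝ) (L : ℝ) : Prop :=
  (∀ x : ℝ, |x| < 1 → Summable fun n => a n * x ^ n) ∧
    Tendsto (fun x : ℝ => (1 - x) * ∑' n, a n * x ^ n) (𝓝[<] 1) (𝓝 L)

/-!
Ranks over a domain are additive along exact sequences, so counting ranks in the long exact
homology sequence, with `dₙ` the rank of the image of `δ : Hₙ₊₁C → HₙA`, gives
`rk HₙA − rk HₙB + rk HₙC = dₙ + dₙ₋₁`, where `d₋₁ = 0` because `H₀B → H₀C` is onto.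
With the signs `(−1)ⁿ`, the alternating combination of the three sequences is the backward
difference of `eₙ = (−1)ⁿ dₙ`, so its generating function is `(1 − x) ∑ eₙ xⁿ`. Multiplying by
`1 − x` and letting `x → 1⁻`, the left side tends to `χ_A(A) − χ_A(B) + χ_A(C)` and the right
side to `0` by weak A-admissibility.
-/

section Rank

variable {R : Type} [CommRing R] [IsDomain R]
  {M N P : Type} [AddCommGroup M] [Module R M] [AddCommGroup N] [Module R N]
  [AddCommGroup P] [Module R P]

theorem rk_eq_finrank : rk R M = Module.finrank R M :=
  (TensorProduct.isBaseChange R M (FractionRing R)).finrank_eq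

theorem rank_lt_aleph0_of_finite_tensor_fractionRing
    [Module.Finite (FractionRing R) (TensorProduct R (FractionRing R) M)] :
    Module.rank R M < Cardinal.aleph0 := by
  rw [← (TensorProduct.isBaseChange R M (FractionRing R)).rank_eq]
  exact Module.rank_lt_aleph0 _ _

theorem Function.Exact.rk_eq_rk_range_add_rk_range {f : M →ₗ[R] N} {g : N →ₗ[R] P}
    (hfg : Function.Exact f g)
    [Module.Finite (FractionRing R) (TensorProduct R (FractionRing R) N)] :
    rk R N = rk R (LinearMap.range f) + rk R (LinearMap.range g) := by
  have hN : Module.rank R N < Cardinal.aleph0 := rank_lt_aleph0_of_finite_tensor_fractionRing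
  have hrank := LinearMap.rank_range_add_rank_ker g
  rw [LinearMap.exact_iff.mp hfg] at hrank
  simp only [rk_eq_finrank, Module.finrank]
  rw [← hrank, Cardinal.toNat_add, add_comm]
  · exact (rank_range_le g).trans_lt hN
  · exact (Submodule.rank_le _).trans_lt hN

theorem rk_range_of_surjective {g : N →ₗ[R] P} (hg : Function.Surjective g) :
    rk R (LinearMap.range g) = rk R P := by
  simp only [rk_eq_finrank, Module.finrank, rank_range_of_surjective g hg]

end Rank

namespace CategoryTheory.ShortComplex.ShortExact

variable {R : Type} [CommRing R] [IsDomain R] {S : ShortComplex (ChainComplex (ModuleCat R) ℕ)}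
  (hS : S.ShortExact)

local notation "Q" => FractionRing R

theorem rk_homology_X₁ (n : ℕ) [Module.Finite Q (TensorProduct R Q (S.X₁.homology n))] :
    rk R (S.X₁.homology n) = rk R (LinearMap.range (hS.δ (n + 1) n (by simp)).hom) +
      rk R (LinearMap.range (HomologicalComplex.homologyMap S.f n).hom) :=
  ((moduleCat_exact_iff_function_exact _).mp
    (hS.homology_exact₁ (n + 1) n (by simp))).rk_eq_rk_range_add_rk_range

include hS in
theorem rk_homology_X₂ (n : ℕ) [Module.Finite Q (TensorProduct R Q (S.X₂.homology n))] :
    rk R (S.X₂.homology n) =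
      rk R (LinearMap.range (HomologicalComplex.homologyMap S.f n).hom) +
        rk R (LinearMap.range (HomologicalComplex.homologyMap S.g n).hom) :=
  ((moduleCat_exact_iff_function_exact _).mp (hS.homology_exact₂ n)).rk_eq_rk_range_add_rk_range

theorem rk_homology_X₃_succ (n : ℕ)
    [Module.Finite Q (TensorProduct R Q (S.X₃.homology (n + 1)))] :
    rk R (S.X₃.homology (n + 1)) =
      rk R (LinearMap.range (HomologicalComplex.homologyMap S.g (n + 1)).hom) +
        rk R (LinearMap.range (hS.δ (n + 1) n (by simp)).hom) :=
  ((moduleCat_exact_iff_function_exact _).mp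
    (hS.homology_exact₃ (n + 1) n (by simp))).rk_eq_rk_range_add_rk_range

include hS in
theorem rk_homology_X₃_zero :
    rk R (S.X₃.homology 0) = rk R (LinearMap.range (HomologicalComplex.homologyMap S.g 0).hom) := by
  have := hS.epi_g
  have : Epi (HomologicalComplex.homologyMap S.g 0) :=
    HomologicalComplex.epi_homologyMap_of_epi_of_not_rel S.g 0 (by simp)
  exact (rk_range_of_surjective ((ModuleCat.epi_iff_surjective _).mp this)).symm

theorem alternating_rk_homology_zero
    [Module.Finite Q (TensorProduct R Q (S.X₁.homology 0))]
    [Module.Finite Q (TensorProduct R Q (S.X₂.homology 0))] :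
    rk R (S.X₁.homology 0) - rk R (S.X₂.homology 0) + rk R (S.X₃.homology 0) =
      (rk R (LinearMap.range (hS.δ 1 0 (by simp)).hom) : ℤ) := by
  rw [hS.rk_homology_X₁ 0, hS.rk_homology_X₂ 0, hS.rk_homology_X₃_zero]
  push_cast
  ring

theorem alternating_rk_homology_succ (n : ℕ)
    [Module.Finite Q (TensorProduct R Q (S.X₁.homology (n + 1)))]
    [Module.Finite Q (TensorProduct R Q (S.X₂.homology (n + 1)))]
    [Module.Finite Q (TensorProduct R Q (S.X₃.homology (n + 1)))] :
    rk R (S.X₁.homology (n + 1)) - rk R (S.X₂.homology (n + 1)) + rk R (S.X₃.homology (n + 1)) =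
      (rk R (LinearMap.range (hS.δ (n + 2) (n + 1) (by simp)).hom) : ℤ) +
        rk R (LinearMap.range (hS.δ (n + 1) n (by simp)).hom) := by
  rw [hS.rk_homology_X₁ (n + 1), hS.rk_homology_X₂ (n + 1), hS.rk_homology_X₃_succ n]
  push_cast
  ring

end CategoryTheory.ShortComplex.ShortExact

theorem eventually_abs_lt_one_nhdsLT : ∀ᶠ x in 𝓝[<] (1 : ℝ), |x| < 1 := by
  filter_upwards [Ioo_mem_nhdsLT (show (-1 : ℝ) < 1 by norm_num)] with x hx
  exact abs_lt.mpr hx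

namespace HasAbelLim

variable {a b : ℕ → ℝ} {L L' : ℝ}

theorem add (ha : HasAbelLim a L) (hb : HasAbelLim b L') :
    HasAbelLim (fun n => a n + b n) (L + L') := by
  refine ⟨fun x hx => by simpa only [add_mul] using (ha.1 x hx).add (hb.1 x hx), ?_⟩
  refine (ha.2.add hb.2).congr' ?_
  filter_upwards [eventually_abs_lt_one_nhdsLT] with x hx
  simp only [add_mul, (ha.1 x hx).tsum_add (hb.1 x hx), mul_add]

theorem sub (ha : HasAbelLim a L) (hb : HasAbelLim b L') :
    HasAbelLim (fun n => a n - b n) (L - L') := by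
  refine ⟨fun x hx => by simpa only [sub_mul] using (ha.1 x hx).sub (hb.1 x hx), ?_⟩
  refine (ha.2.sub hb.2).congr' ?_
  filter_upwards [eventually_abs_lt_one_nhdsLT] with x hx
  simp only [sub_mul, (ha.1 x hx).tsum_sub (hb.1 x hx), mul_sub]

theorem unique (ha : HasAbelLim a L) (ha' : HasAbelLim a L') : L = L' :=
  tendsto_nhds_unique ha.2 ha'.2

end HasAbelLim

theorem summable_mul_pow_and_tsum_eq_one_sub_mul_tsum {s e : ℕ → ℝ} {x : ℝ} (h0 : s 0 = e 0)
    (hs : ∀ n, s (n + 1) = e (n + 1) - e n) (he : Summable fun n => e n * x ^ n) :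
    Summable (fun n => s n * x ^ n) ∧
      ∑' n, s n * x ^ n = (1 - x) * ∑' n, e n * x ^ n := by
  have hshift : ∀ n, s (n + 1) * x ^ (n + 1) = e (n + 1) * x ^ (n + 1) - x * (e n * x ^ n) := by
    intro n
    rw [hs]
    ring
  have he' : Summable fun n => e (n + 1) * x ^ (n + 1) := (summable_nat_add_iff 1).mpr he
  have hsum : Summable fun n => s n * x ^ n := by
    refine (summable_nat_add_iff (f := fun n => s n * x ^ n) 1).mp ?_
    simpa only [hshift] using he'.sub (he.mul_left x)
  refine ⟨hsum, ?_⟩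
  calc ∑' n, s n * x ^ n = s 0 + ∑' n, s (n + 1) * x ^ (n + 1) := by
        simpa using hsum.tsum_eq_zero_add
    _ = e 0 + ∑' n, e (n + 1) * x ^ (n + 1) - x * ∑' n, e n * x ^ n := by
        rw [h0, tsum_congr hshift, he'.tsum_sub (he.mul_left x), tsum_mul_left]
        ring
    _ = (1 - x) * ∑' n, e n * x ^ n := by
        rw [he.tsum_eq_zero_add]
        simp only [pow_zero, mul_one]
        ring

theorem hasAbelLim_zero_of_backward_difference {s e : ℕ → ℝ} (h0 : s 0 = e 0)
    (hs : ∀ n, s (n + 1) = e (n + 1) - e n)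
    (he : ∀ x : ℝ, |x| < 1 → Summable fun n => e n * x ^ n)
    (hlim : Tendsto (fun x : ℝ => (1 - x) ^ 2 * ∑' n, e n * x ^ n) (𝓝[<] 1) (𝓝 0)) :
    HasAbelLim s 0 := by
  refine ⟨fun x hx => (summable_mul_pow_and_tsum_eq_one_sub_mul_tsum h0 hs (he x hx)).1,
    hlim.congr' ?_⟩
  filter_upwards [eventually_abs_lt_one_nhdsLT] with x hx
  rw [(summable_mul_pow_and_tsum_eq_one_sub_mul_tsum h0 hs (he x hx)).2]
  ring

/-- Additivity of the AE characteristic on weakly A-admissible short exact sequences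
of Abel complexes: `χ_A(A) − χ_A(B) + χ_A(C) = 0`. -/
theorem stmt_16 (R : Type) [CommRing R] [IsDomain R]
    (S : ShortComplex (ChainComplex (ModuleCat R) ℕ)) (hS : S.ShortExact)
    (hfinA : ∀ n, Module.Finite (FractionRing R)
      (TensorProduct R (FractionRing R) (S.X₁.homology n)))
    (hfinB : ∀ n, Module.Finite (FractionRing R)
      (TensorProduct R (FractionRing R) (S.X₂.homology n)))
    (hfinC : ∀ n, Module.Finite (FractionRing R)
      (TensorProduct R (FractionRing R) (S.X₃.homology n)))
    (d : ℕ → ℕ)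
    (hd : ∀ n, d n = rk R (LinearMap.range ((hS.δ (n + 1) n (by simp)).hom :
      S.X₃.homology (n + 1) →ₗ[R] S.X₁.homology n)))
    -- the three complexes are Abel complexes, with AE characteristics χA, χB, χC:
    (χA χB χC : ℝ)
    (hA : HasAbelLim (fun n => (-1) ^ n * (rk R (S.X₁.homology n) : ℝ)) χA)
    (hB : HasAbelLim (fun n => (-1) ^ n * (rk R (S.X₂.homology n) : ℝ)) χB)
    (hC : HasAbelLim (fun n => (-1) ^ n * (rk R (S.X₃.homology n) : ℝ)) χC)
    -- the short exact sequence is weakly A-admissible: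
    (hrd : ∀ x : ℝ, |x| < 1 → Summable fun n => ((-1) ^ n * (d n : ℝ)) * x ^ n)
    (hadm : Tendsto (fun x : ℝ => (1 - x) ^ 2 * ∑' n, ((-1) ^ n * (d n : ℝ)) * x ^ n)
      (𝓝[<] 1) (𝓝 0)) :
    χA - χB + χC = 0 := by
  obtain rfl : d = fun n => rk R (LinearMap.range (hS.δ (n + 1) n (by simp)).hom) := funext hd
  have := hfinA; have := hfinB; have := hfinC
  refine ((hA.sub hB).add hC).unique
    (hasAbelLim_zero_of_backward_difference ?_ (fun n => ?_) hrd hadm)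
  · simp only [pow_zero, one_mul]
    exact_mod_cast hS.alternating_rk_homology_zero
  · have h := congrArg (Int.cast : ℤ → ℝ) (hS.alternating_rk_homology_succ n)
    push_cast at h
    rw [pow_succ]
    linear_combination (-(-1 : ℝ) ^ n) * h
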